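/- arXiv:2305.18223 — 2 statements merged into one kernel-verified Lean document; each statement's English description precedes it below -/
import Mathlib

section
/- (Dong's lemma) Let a(w), b(w), c(w) be pairwise mutually local formal distributions (quantum fields) with coefficients in an associative algebra (resp. End(V)). Then for every n ∈ ℤ, the distributions a(w)_{(n)}b(w) and c(w) are mutually local. -/
namespace DongAux

variable {V : Type*} [AddCommGroup V]

/-- two-variable binomial locality sum, matching the statement's pattern. -/
def bsum (N : ℕ) (g : ℤ → ℤ → V) (p q : ℤ) : V :=
  ∑ j ∈ Finset.range (N + 1), ((-1 : ℤ) ^ j * (N.choose j : ℤ)) • g (p + N - j) (q + j)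

theorem bsum_succ (N : ℕ) (g : ℤ → ℤ → V) (p q : ℤ) :
    bsum (N + 1) g p q = bsum N g (p + 1) q - bsum N g p (q + 1) := by
  set A : ℕ → V := fun j => ((-1 : ℤ) ^ j * (N.choose j : ℤ)) • g (p + 1 + (N:ℤ) - j) (q + j)
    with hA
  set B : ℕ → V := fun j => ((-1 : ℤ) ^ j * (N.choose j : ℤ)) • g (p + (N:ℤ) - j) (q + 1 + j)
    with hB
  have hbsA : bsum N g (p+1) q = ∑ j ∈ Finset.range (N+1), A j := rfl
  have hbsB : bsum N g p (q+1) = ∑ j ∈ Finset.range (N+1), B j := rfl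
  set F : ℕ → V := fun j => ((-1 : ℤ) ^ j * ((N+1).choose j : ℤ)) •
      g (p + ((N:ℤ)+1) - j) (q + j) with hF
  have hbsF : bsum (N+1) g p q = ∑ j ∈ Finset.range (N+2), F j := by
    unfold bsum
    refine Finset.sum_congr rfl fun j hj => ?_
    rw [hF]; push_cast; ring_nf
  have hterm : ∀ j ∈ Finset.range (N+1), F (j+1) = A (j+1) - B j := by
    intro j hj
    rw [hF, hA, hB]
    have h1 : p + ((N:ℤ)+1) - (↑(j+1)) = p + (N:ℤ) - j := by push_cast; ring
    have h2 : p + 1 + (N:ℤ) - (↑(j+1)) = p + (N:ℤ) - j := by push_cast; ring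
    have h3 : (q + (↑(j+1) :ℤ)) = q + 1 + (j:ℤ) := by push_cast; ring
    simp only [h1, h2, h3]
    simp only [Nat.choose_succ_succ, Nat.cast_add]
    rw [← sub_smul]
    congr 1
    ring
  have hF0 : F 0 = A 0 := by
    simp only [hF, hA]
    push_cast
    ring_nf
    simp [Nat.choose_zero_right]
  have hAlast : A (N+1) = 0 := by
    rw [hA]; simp [Nat.choose_succ_self]
  calc bsum (N+1) g p q = ∑ j ∈ Finset.range (N+1), F (j+1) + F 0 := by
        rw [hbsF, Finset.sum_range_succ' F (N+1)]
    _ = ∑ j ∈ Finset.range (N+1), (A (j+1) - B j) + A 0 := by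
        rw [Finset.sum_congr rfl hterm, hF0]
    _ = (∑ j ∈ Finset.range (N+1), A (j+1) + A 0) - ∑ j ∈ Finset.range (N+1), B j := by
        rw [Finset.sum_sub_distrib]; abel
    _ = ∑ j ∈ Finset.range (N+2), A j - ∑ j ∈ Finset.range (N+1), B j := by
        rw [Finset.sum_range_succ' A (N+1)]
    _ = bsum N g (p+1) q - bsum N g p (q+1) := by
        rw [Finset.sum_range_succ A (N+1), hAlast, hbsA, hbsB]; abel

/-- upward closure of locality -/
theorem bsum_zero_of_le {N N' : ℕ} (hNN' : N ≤ N') (g : ℤ → ℤ → V)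
    (h0 : ∀ p q : ℤ, bsum N g p q = 0) : ∀ p q : ℤ, bsum N' g p q = 0 := by
  induction N' , hNN' using Nat.le_induction with
  | base => exact h0
  | succ N' hN ih => intro p q; rw [bsum_succ, ih, ih, sub_zero]

-- shift operators on 3-variable functions
def S1 : AddMonoid.End (ℤ → ℤ → ℤ → V) :=
  AddMonoidHom.mk' (fun h => fun p q r => h (p+1) q r) (fun _ _ => rfl)
def S2 : AddMonoid.End (ℤ → ℤ → ℤ → V) :=
  AddMonoidHom.mk' (fun h => fun p q r => h p (q+1) r) (fun _ _ => rfl)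
def S3 : AddMonoid.End (ℤ → ℤ → ℤ → V) :=
  AddMonoidHom.mk' (fun h => fun p q r => h p q (r+1)) (fun _ _ => rfl)

def Dz : AddMonoid.End (ℤ → ℤ → ℤ → V) := S1 - S2
def Vz : AddMonoid.End (ℤ → ℤ → ℤ → V) := S1 - S3
def Tz : AddMonoid.End (ℤ → ℤ → ℤ → V) := S2 - S3

lemma Dz_apply (h : ℤ → ℤ → ℤ → V) (p q r : ℤ) :
    Dz h p q r = h (p+1) q r - h p (q+1) r := rfl
lemma Vz_apply (h : ℤ → ℤ → ℤ → V) (p q r : ℤ) :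
    Vz h p q r = h (p+1) q r - h p q (r+1) := rfl
lemma Tz_apply (h : ℤ → ℤ → ℤ → V) (p q r : ℤ) :
    Tz h p q r = h p (q+1) r - h p q (r+1) := rfl

lemma commute_S12 : Commute (S1 : AddMonoid.End (ℤ → ℤ → ℤ → V)) S2 := AddMonoidHom.ext fun _ => rfl
lemma commute_S13 : Commute (S1 : AddMonoid.End (ℤ → ℤ → ℤ → V)) S3 := AddMonoidHom.ext fun _ => rfl
lemma commute_S23 : Commute (S2 : AddMonoid.End (ℤ → ℤ → ℤ → V)) S3 := AddMonoidHom.ext fun _ => rfl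

lemma commute_DV : Commute (Dz : AddMonoid.End (ℤ → ℤ → ℤ → V)) Vz := by
  apply AddMonoidHom.ext; intro h; funext p q r
  show Dz (Vz h) p q r = Vz (Dz h) p q r
  simp only [Dz_apply, Vz_apply]; abel
lemma commute_DT : Commute (Dz : AddMonoid.End (ℤ → ℤ → ℤ → V)) Tz := by
  apply AddMonoidHom.ext; intro h; funext p q r
  show Dz (Tz h) p q r = Tz (Dz h) p q r
  simp only [Dz_apply, Tz_apply]; abel
lemma commute_VT : Commute (Vz : AddMonoid.End (ℤ → ℤ → ℤ → V)) Tz := by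
  apply AddMonoidHom.ext; intro h; funext p q r
  show Vz (Tz h) p q r = Tz (Vz h) p q r
  simp only [Vz_apply, Tz_apply]; abel

lemma Dz_pow_succ (N : ℕ) (g : ℤ → ℤ → ℤ → V) : (Dz^(N+1)) g = (Dz^N) (Dz g) := by
  rw [pow_succ]; rfl
lemma Vz_pow_succ (N : ℕ) (g : ℤ → ℤ → ℤ → V) : (Vz^(N+1)) g = (Vz^N) (Vz g) := by
  rw [pow_succ]; rfl
lemma Tz_pow_succ (N : ℕ) (g : ℤ → ℤ → ℤ → V) : (Tz^(N+1)) g = (Tz^N) (Tz g) := by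
  rw [pow_succ]; rfl

-- generic bsum helpers
lemma bsum_sub (N : ℕ) (g1 g2 : ℤ → ℤ → V) (p q : ℤ) :
    bsum N (fun x y => g1 x y - g2 x y) p q = bsum N g1 p q - bsum N g2 p q := by
  unfold bsum
  rw [← Finset.sum_sub_distrib]
  exact Finset.sum_congr rfl fun j hj => smul_sub _ _ _

lemma bsum_shiftL (N : ℕ) (g : ℤ → ℤ → V) (p q : ℤ) :
    bsum N (fun x y => g (x+1) y) p q = bsum N g (p+1) q := by
  unfold bsum
  refine Finset.sum_congr rfl fun j hj => ?_
  beta_reduce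
  have : p + (N:ℤ) - j + 1 = p + 1 + (N:ℤ) - j := by ring
  rw [this]

lemma bsum_shiftR (N : ℕ) (g : ℤ → ℤ → V) (p q : ℤ) :
    bsum N (fun x y => g x (y+1)) p q = bsum N g p (q+1) := by
  unfold bsum
  refine Finset.sum_congr rfl fun j hj => ?_
  beta_reduce
  have : q + (j:ℤ) + 1 = q + 1 + (j:ℤ) := by ring
  rw [this]

-- power-evaluation lemmas
theorem D_pow_eval (N : ℕ) (h : ℤ → ℤ → ℤ → V) (p q r : ℤ) :
    ((Dz^N) h) p q r = bsum N (fun x y => h x y r) p q := by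
  induction N generalizing h with
  | zero =>
      show h p q r = bsum 0 (fun x y => h x y r) p q
      unfold bsum; simp
  | succ N ih =>
      rw [Dz_pow_succ]
      calc ((Dz^N) (Dz h)) p q r
          = bsum N (fun x y => Dz h x y r) p q := ih _
        _ = bsum N (fun x y => h (x+1) y r - h x (y+1) r) p q := rfl
        _ = bsum N (fun x y => h (x+1) y r) p q - bsum N (fun x y => h x (y+1) r) p q :=
            bsum_sub N _ _ p q
        _ = bsum N (fun x y => h x y r) (p+1) q - bsum N (fun x y => h x y r) p (q+1) := by
            rw [bsum_shiftL N (fun x y => h x y r) p q, bsum_shiftR N (fun x y => h x y r) p q]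
        _ = bsum (N+1) (fun x y => h x y r) p q := (bsum_succ N _ p q).symm

theorem Vx_pow_eval (N : ℕ) (h : ℤ → ℤ → ℤ → V) (p q r : ℤ) :
    ((Vz^N) h) p q r = bsum N (fun x z => h x q z) p r := by
  induction N generalizing h with
  | zero =>
      show h p q r = bsum 0 (fun x z => h x q z) p r
      unfold bsum; simp
  | succ N ih =>
      rw [Vz_pow_succ]
      calc ((Vz^N) (Vz h)) p q r
          = bsum N (fun x z => Vz h x q z) p r := ih _
        _ = bsum N (fun x z => h (x+1) q z - h x q (z+1)) p r := rfl
        _ = bsum N (fun x z => h (x+1) q z) p r - bsum N (fun x z => h x q (z+1)) p r :=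
            bsum_sub N _ _ p r
        _ = bsum N (fun x z => h x q z) (p+1) r - bsum N (fun x z => h x q z) p (r+1) := by
            rw [bsum_shiftL N (fun x z => h x q z) p r, bsum_shiftR N (fun x z => h x q z) p r]
        _ = bsum (N+1) (fun x z => h x q z) p r := (bsum_succ N _ p r).symm

theorem T_pow_eval (N : ℕ) (h : ℤ → ℤ → ℤ → V) (p q r : ℤ) :
    ((Tz^N) h) p q r = bsum N (fun y z => h p y z) q r := by
  induction N generalizing h with
  | zero =>
      show h p q r = bsum 0 (fun y z => h p y z) q r
      unfold bsum; simp
  | succ N ih =>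
      rw [Tz_pow_succ]
      calc ((Tz^N) (Tz h)) p q r
          = bsum N (fun y z => Tz h p y z) q r := ih _
        _ = bsum N (fun y z => h p (y+1) z - h p y (z+1)) q r := rfl
        _ = bsum N (fun y z => h p (y+1) z) q r - bsum N (fun y z => h p y (z+1)) q r :=
            bsum_sub N _ _ q r
        _ = bsum N (fun y z => h p y z) (q+1) r - bsum N (fun y z => h p y z) q (r+1) := by
            rw [bsum_shiftL N (fun y z => h p y z) q r, bsum_shiftR N (fun y z => h p y z) q r]
        _ = bsum (N+1) (fun y z => h p y z) q r := (bsum_succ N _ q r).symm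

-- truncated residue sums (the two expansions of (z-w)^n)
def Psum (n : ℤ) (K : ℕ) (h : ℤ → ℤ → ℤ → V) (q r : ℤ) : V :=
  ∑ j ∈ Finset.range K, ((-1:ℤ)^j * Ring.choose n j) • h (n - j) (q + j) r
def Qsum (n : ℤ) (K : ℕ) (h : ℤ → ℤ → ℤ → V) (q r : ℤ) : V :=
  ∑ j ∈ Finset.range K, ((-1:ℤ)^j * Ring.choose n j) • h j (q + n - j) r

theorem Psum_step (n : ℤ) (K : ℕ) (h : ℤ → ℤ → ℤ → V) (q r : ℤ) :
    Psum n (K+1) (Dz h) q r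
      = Psum (n+1) (K+1) h q r - ((-1:ℤ)^K * Ring.choose n K) • h (n - K) (q + K + 1) r := by
  set G1 : ℕ → V := fun j => ((-1:ℤ)^j * Ring.choose n j) • h (n - j + 1) (q + j) r with hG1
  set G2 : ℕ → V := fun j => ((-1:ℤ)^j * Ring.choose n j) • h (n - j) (q + j + 1) r with hG2
  have hL : Psum n (K+1) (Dz h) q r
      = ∑ j ∈ Finset.range (K+1), G1 j - ∑ j ∈ Finset.range (K+1), G2 j := by
    unfold Psum
    rw [← Finset.sum_sub_distrib]
    refine Finset.sum_congr rfl fun j hj => ?_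
    rw [Dz_apply, smul_sub, hG1, hG2]
  set F : ℕ → V := fun j => ((-1:ℤ)^j * Ring.choose (n+1) j) • h (n + 1 - j) (q + j) r with hF
  have hR : Psum (n+1) (K+1) h q r = ∑ j ∈ Finset.range (K+1), F j := rfl
  have hF0 : F 0 = G1 0 := by
    simp only [hF, hG1]
    norm_num [Ring.choose_zero_right]
  have hterm : ∀ j ∈ Finset.range K, F (j+1) = G1 (j+1) - G2 j := by
    intro j hj
    simp only [hF, hG1, hG2]
    have h1 : n + 1 - (↑(j+1):ℤ) = n - ↑j := by push_cast; ring
    have h2 : n - (↑(j+1):ℤ) + 1 = n - ↑j := by push_cast; ring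
    have h3 : q + (↑(j+1):ℤ) = q + ↑j + 1 := by push_cast; ring
    rw [h1, h2, h3, Ring.choose_succ_succ]
    rw [← sub_smul]
    congr 1
    ring
  have hG2K : G2 K = ((-1:ℤ)^K * Ring.choose n K) • h (n - K) (q + K + 1) r := rfl
  calc Psum n (K+1) (Dz h) q r
      = ∑ j ∈ Finset.range (K+1), G1 j - ∑ j ∈ Finset.range (K+1), G2 j := hL
    _ = (∑ j ∈ Finset.range K, G1 (j+1) + G1 0) - (∑ j ∈ Finset.range K, G2 j + G2 K) := by
        rw [Finset.sum_range_succ' G1 K, Finset.sum_range_succ G2 K]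
    _ = (∑ j ∈ Finset.range K, (G1 (j+1) - G2 j) + G1 0) - G2 K := by
        rw [Finset.sum_sub_distrib]; abel
    _ = (∑ j ∈ Finset.range K, F (j+1) + F 0) - G2 K := by
        rw [Finset.sum_congr rfl fun j hj => (hterm j hj).symm, hF0]
    _ = ∑ j ∈ Finset.range (K+1), F j - G2 K := by
        rw [← Finset.sum_range_succ' F K]
    _ = Psum (n+1) (K+1) h q r - ((-1:ℤ)^K * Ring.choose n K) • h (n - K) (q + K + 1) r := by
        rw [← hR, hG2K]

theorem Qsum_step (n : ℤ) (K : ℕ) (h : ℤ → ℤ → ℤ → V) (q r : ℤ) :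
    Qsum n (K+1) (Dz h) q r
      = -(Qsum (n+1) (K+1) h q r) + ((-1:ℤ)^K * Ring.choose n K) • h (K+1) (q + n - K) r := by
  set G1 : ℕ → V := fun j => ((-1:ℤ)^j * Ring.choose n j) • h (j + 1) (q + n - j) r with hG1
  set G2 : ℕ → V := fun j => ((-1:ℤ)^j * Ring.choose n j) • h j (q + n - j + 1) r with hG2
  have hL : Qsum n (K+1) (Dz h) q r
      = ∑ j ∈ Finset.range (K+1), G1 j - ∑ j ∈ Finset.range (K+1), G2 j := by
    unfold Qsum
    rw [← Finset.sum_sub_distrib]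
    refine Finset.sum_congr rfl fun j hj => ?_
    rw [Dz_apply, smul_sub, hG1, hG2]
  set F : ℕ → V := fun j => ((-1:ℤ)^j * Ring.choose (n+1) j) • h j (q + (n + 1) - j) r with hF
  have hR : Qsum (n+1) (K+1) h q r = ∑ j ∈ Finset.range (K+1), F j := rfl
  have hF0 : F 0 = G2 0 := by
    simp only [hF, hG2]
    have harg : q + (n + 1) - ((0:ℕ):ℤ) = q + n - ((0:ℕ):ℤ) + 1 := by push_cast; ring
    rw [harg]
    norm_num [Ring.choose_zero_right]
  have hterm : ∀ j ∈ Finset.range K, G1 j - G2 (j+1) = -F (j+1) := by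
    intro j hj
    simp only [hF, hG1, hG2]
    have h1 : q + (n + 1) - (↑(j+1):ℤ) = q + n - ↑j := by push_cast; ring
    have h2 : q + n - (↑(j+1):ℤ) + 1 = q + n - ↑j := by push_cast; ring
    have h3 : ((↑(j+1):ℤ)) = (↑j:ℤ) + 1 := by push_cast; ring
    rw [h1, h2, h3, Ring.choose_succ_succ, ← sub_smul, ← neg_smul]
    congr 1
    ring
  have hG1K : G1 K = ((-1:ℤ)^K * Ring.choose n K) • h (K + 1) (q + n - K) r := by
    simp only [hG1]
  calc Qsum n (K+1) (Dz h) q r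
      = ∑ j ∈ Finset.range (K+1), G1 j - ∑ j ∈ Finset.range (K+1), G2 j := hL
    _ = (∑ j ∈ Finset.range K, G1 j + G1 K) - (∑ j ∈ Finset.range K, G2 (j+1) + G2 0) := by
        rw [Finset.sum_range_succ G1 K, Finset.sum_range_succ' G2 K]
    _ = ∑ j ∈ Finset.range K, (G1 j - G2 (j+1)) + G1 K - G2 0 := by
        rw [Finset.sum_sub_distrib]; abel
    _ = ∑ j ∈ Finset.range K, (-F (j+1)) + G1 K - G2 0 := by
        rw [Finset.sum_congr rfl hterm]
    _ = -(∑ j ∈ Finset.range K, F (j+1) + F 0) + G1 K := by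
        rw [Finset.sum_neg_distrib, hF0]; abel
    _ = -(∑ j ∈ Finset.range (K+1), F j) + G1 K := by
        rw [← Finset.sum_range_succ' F K]
    _ = -(Qsum (n+1) (K+1) h q r) + ((-1:ℤ)^K * Ring.choose n K) • h (K+1) (q + n - K) r := by
        rw [← hR, hG1K]

theorem Psum_tele (s : ℕ) (n : ℤ) (K : ℕ) (h : ℤ → ℤ → ℤ → V) (q r : ℤ)
    (hvan : ∀ p Q r', q + (K:ℤ) + 1 ≤ Q → h p Q r' = 0) :
    Psum n (K+1) ((Dz^s) h) q r = Psum (n + s) (K+1) h q r := by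
  induction s generalizing n h with
  | zero =>
      show Psum n (K+1) h q r = Psum (n + ((0:ℕ):ℤ)) (K+1) h q r
      norm_num
  | succ s ih =>
      have hvanD : ∀ p Q r', q + (K:ℤ) + 1 ≤ Q → (Dz h) p Q r' = 0 := by
        intro p Q r' hQ
        rw [Dz_apply, hvan _ _ _ hQ, hvan _ _ _ (by omega), sub_zero]
      rw [Dz_pow_succ, ih n (Dz h) hvanD, Psum_step (n + s) K h q r,
        hvan _ _ _ (le_refl _), smul_zero, sub_zero]
      have : n + (s:ℤ) + 1 = n + ((s+1:ℕ):ℤ) := by push_cast; ring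
      rw [this]

theorem Qsum_tele (s : ℕ) (n : ℤ) (K : ℕ) (h : ℤ → ℤ → ℤ → V) (q r : ℤ)
    (hvan : ∀ P Q, (K:ℤ) + 1 ≤ P → h P Q r = 0) :
    Qsum n (K+1) ((Dz^s) h) q r = ((-1:ℤ)^s) • Qsum (n + s) (K+1) h q r := by
  induction s generalizing n h with
  | zero =>
      show Qsum n (K+1) h q r = ((-1:ℤ)^0) • Qsum (n + ((0:ℕ):ℤ)) (K+1) h q r
      norm_num
  | succ s ih =>
      have hvanD : ∀ P Q, (K:ℤ) + 1 ≤ P → (Dz h) P Q r = 0 := by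
        intro P Q hP
        rw [Dz_apply, hvan _ _ hP, hvan _ _ (by omega), sub_zero]
      rw [Dz_pow_succ, ih n (Dz h) hvanD, Qsum_step (n + s) K h q r,
        hvan _ _ (le_refl _), smul_zero, add_zero]
      have : n + (s:ℤ) + 1 = n + ((s+1:ℕ):ℤ) := by push_cast; ring
      rw [this, smul_neg, ← neg_smul]
      congr 1
      ring

theorem Psum_fin (l : ℕ) (K : ℕ) (hK : l + 1 ≤ K) (h : ℤ → ℤ → ℤ → V) (q r : ℤ) :
    Psum (l : ℤ) K h q r = bsum l (fun x y => h x y r) 0 q := by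
  unfold Psum bsum
  calc ∑ j ∈ Finset.range K, ((-1:ℤ)^j * Ring.choose (l:ℤ) j) • h ((l:ℤ) - j) (q + j) r
      = ∑ j ∈ Finset.range K, ((-1:ℤ)^j * (l.choose j : ℤ)) • h ((l:ℤ) - j) (q + j) r := by
        refine Finset.sum_congr rfl fun j hj => ?_
        rw [Ring.choose_natCast]
    _ = ∑ j ∈ Finset.range (l+1), ((-1:ℤ)^j * (l.choose j : ℤ)) • h ((l:ℤ) - j) (q + j) r := by
        refine (Finset.sum_subset (Finset.range_subset_range.mpr hK) ?_).symm
        intro x _ hnx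
        have hx : l < x := by simpa using hnx
        rw [Nat.choose_eq_zero_of_lt hx]
        norm_num
    _ = ∑ j ∈ Finset.range (l+1), ((-1:ℤ)^j * (l.choose j : ℤ)) •
          (fun x y => h x y r) ((0:ℤ) + l - j) (q + j) := by
        refine Finset.sum_congr rfl fun j hj => ?_
        beta_reduce
        have : (0:ℤ) + (l:ℤ) - j = (l:ℤ) - j := by ring
        rw [this]

theorem Qsum_fin (l : ℕ) (K : ℕ) (hK : l + 1 ≤ K) (h : ℤ → ℤ → ℤ → V) (q r : ℤ) :
    (((l:ℤ).negOnePow : ℤ)) • Qsum (l : ℤ) K h q r = bsum l (fun x y => h x y r) 0 q := by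
  unfold Qsum bsum
  have htr : ∑ j ∈ Finset.range K, ((-1:ℤ)^j * Ring.choose (l:ℤ) j) • h j (q + l - j) r
      = ∑ j ∈ Finset.range (l+1), ((-1:ℤ)^j * (l.choose j : ℤ)) • h j (q + l - j) r := by
    calc ∑ j ∈ Finset.range K, ((-1:ℤ)^j * Ring.choose (l:ℤ) j) • h j (q + l - j) r
        = ∑ j ∈ Finset.range K, ((-1:ℤ)^j * (l.choose j : ℤ)) • h j (q + l - j) r := by
          refine Finset.sum_congr rfl fun j hj => ?_
          rw [Ring.choose_natCast]
      _ = ∑ j ∈ Finset.range (l+1), ((-1:ℤ)^j * (l.choose j : ℤ)) • h j (q + l - j) r := by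
          refine (Finset.sum_subset (Finset.range_subset_range.mpr hK) ?_).symm
          intro x _ hnx
          have hx : l < x := by simpa using hnx
          rw [Nat.choose_eq_zero_of_lt hx]
          norm_num
  rw [htr, Finset.smul_sum]
  rw [← Finset.sum_range_reflect]
  refine Finset.sum_congr rfl fun j hj => ?_
  have hjl : j ≤ l := by simpa [Nat.lt_succ_iff] using hj
  have hsub : ((l + 1 - 1 - j : ℕ) : ℤ) = (l : ℤ) - j := by omega
  have hchoose : l.choose (l + 1 - 1 - j) = l.choose j := by
    have : l + 1 - 1 - j = l - j := by omega
    rw [this, Nat.choose_symm hjl]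
  have hsign : ((-1:ℤ)^(l + 1 - 1 - j)) = (-1:ℤ)^(l - j) := by
    rw [show l + 1 - 1 - j = l - j from by omega]
  rw [hchoose, hsign, hsub, smul_smul]
  have harg1 : q + (l:ℤ) - ((l:ℤ) - j) = q + j := by ring
  have harg2 : (0:ℤ) + (l:ℤ) - j = (l:ℤ) - j := by ring
  rw [harg1, harg2]
  congr 1
  rw [Int.coe_negOnePow_natCast]
  have h2 : l + (l - j) = 2*(l-j) + j := by omega
  rw [← mul_assoc, ← pow_add, h2, pow_add, pow_mul]
  norm_num


-- more helpers
lemma bsum_add (N : ℕ) (g1 g2 : ℤ → ℤ → V) (p q : ℤ) :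
    bsum N (fun x y => g1 x y + g2 x y) p q = bsum N g1 p q + bsum N g2 p q := by
  unfold bsum
  rw [← Finset.sum_add_distrib]
  exact Finset.sum_congr rfl fun j hj => smul_add _ _ _

lemma bsum_neg (N : ℕ) (g : ℤ → ℤ → V) (p q : ℤ) :
    bsum N (fun x y => -(g x y)) p q = -(bsum N g p q) := by
  unfold bsum
  rw [← Finset.sum_neg_distrib]
  exact Finset.sum_congr rfl fun j hj => smul_neg _ _

lemma bsum_zsmul (N : ℕ) (cc : ℤ) (g : ℤ → ℤ → V) (p q : ℤ) :
    bsum N (fun x y => cc • g x y) p q = cc • bsum N g p q := by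
  unfold bsum
  rw [Finset.smul_sum]
  exact Finset.sum_congr rfl fun j hj => smul_comm _ _ _

lemma bsum_congr_window (N : ℕ) (g1 g2 : ℤ → ℤ → V) (p q : ℤ)
    (hw : ∀ i : ℕ, i ≤ N → g1 (p + N - i) (q + i) = g2 (p + N - i) (q + i)) :
    bsum N g1 p q = bsum N g2 p q := by
  unfold bsum
  refine Finset.sum_congr rfl fun j hj => ?_
  rw [hw j (by simpa [Nat.lt_succ_iff] using hj)]

lemma bsum_congr (N : ℕ) {g1 g2 : ℤ → ℤ → V} (h : ∀ x y, g1 x y = g2 x y) (p q : ℤ) :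
    bsum N g1 p q = bsum N g2 p q := by
  unfold bsum
  exact Finset.sum_congr rfl fun j _ => by rw [h]

lemma Psum_zero (n : ℤ) (K : ℕ) (q r : ℤ) :
    Psum n K (0 : ℤ → ℤ → ℤ → V) q r = 0 := by
  unfold Psum; simp

lemma Qsum_zero (n : ℤ) (K : ℕ) (q r : ℤ) :
    Qsum n K (0 : ℤ → ℤ → ℤ → V) q r = 0 := by
  unfold Qsum; simp

lemma Psum_zsmul (n : ℤ) (K : ℕ) (cc : ℤ) (h : ℤ → ℤ → ℤ → V) (q r : ℤ) :
    Psum n K (cc • h) q r = cc • Psum n K h q r := by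
  unfold Psum
  rw [Finset.smul_sum]
  refine Finset.sum_congr rfl fun j hj => ?_
  show _ • (cc • h _ _ _) = cc • _
  rw [smul_comm]

lemma Qsum_zsmul (n : ℤ) (K : ℕ) (cc : ℤ) (h : ℤ → ℤ → ℤ → V) (q r : ℤ) :
    Qsum n K (cc • h) q r = cc • Qsum n K h q r := by
  unfold Qsum
  rw [Finset.smul_sum]
  refine Finset.sum_congr rfl fun j hj => ?_
  show _ • (cc • h _ _ _) = cc • _
  rw [smul_comm]

lemma Psum_finsum {ι : Type*} (fs : Finset ι) (C : ι → ℤ) (G : ι → ℤ → ℤ → ℤ → V)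
    (n : ℤ) (K : ℕ) (q r : ℤ) :
    Psum n K (∑ s ∈ fs, C s • G s) q r = ∑ s ∈ fs, C s • Psum n K (G s) q r := by
  unfold Psum
  calc ∑ j ∈ Finset.range K, ((-1:ℤ)^j * Ring.choose n j) •
        (∑ s ∈ fs, C s • G s) (n - j) (q + j) r
      = ∑ j ∈ Finset.range K, ∑ s ∈ fs,
          C s • (((-1:ℤ)^j * Ring.choose n j) • G s (n - j) (q + j) r) := by
        refine Finset.sum_congr rfl fun j hj => ?_
        simp only [Finset.sum_apply, Pi.smul_apply, Finset.smul_sum]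
        exact Finset.sum_congr rfl fun s hs => smul_comm _ _ _
    _ = ∑ s ∈ fs, C s • ∑ j ∈ Finset.range K,
          ((-1:ℤ)^j * Ring.choose n j) • G s (n - j) (q + j) r := by
        rw [Finset.sum_comm]
        exact Finset.sum_congr rfl fun s hs => (Finset.smul_sum).symm

lemma Qsum_finsum {ι : Type*} (fs : Finset ι) (C : ι → ℤ) (G : ι → ℤ → ℤ → ℤ → V)
    (n : ℤ) (K : ℕ) (q r : ℤ) :
    Qsum n K (∑ s ∈ fs, C s • G s) q r = ∑ s ∈ fs, C s • Qsum n K (G s) q r := by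
  unfold Qsum
  calc ∑ j ∈ Finset.range K, ((-1:ℤ)^j * Ring.choose n j) •
        (∑ s ∈ fs, C s • G s) j (q + n - j) r
      = ∑ j ∈ Finset.range K, ∑ s ∈ fs,
          C s • (((-1:ℤ)^j * Ring.choose n j) • G s j (q + n - j) r) := by
        refine Finset.sum_congr rfl fun j hj => ?_
        simp only [Finset.sum_apply, Pi.smul_apply, Finset.smul_sum]
        exact Finset.sum_congr rfl fun s hs => smul_comm _ _ _
    _ = ∑ s ∈ fs, C s • ∑ j ∈ Finset.range K,
          ((-1:ℤ)^j * Ring.choose n j) • G s j (q + n - j) r := by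
        rw [Finset.sum_comm]
        exact Finset.sum_congr rfl fun s hs => (Finset.smul_sum).symm

lemma neg_end_pow (f : AddMonoid.End (ℤ → ℤ → ℤ → V)) (s : ℕ) (h : ℤ → ℤ → ℤ → V) :
    ((-f)^s) h = ((-1:ℤ)^s) • ((f^s) h) := by
  induction s generalizing h with
  | zero => show h = ((-1:ℤ)^0) • h; norm_num
  | succ s ih =>
      have e1 : ((-f)^(s+1)) h = ((-f)^s) ((-f) h) := by rw [pow_succ]; rfl
      have e2 : ((f)^(s+1)) h = ((f)^s) (f h) := by rw [pow_succ]; rfl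
      rw [e1, e2, ih]
      have e3 : (-f) h = -(f h) := rfl
      rw [e3, map_neg, smul_neg, ← neg_smul]
      congr 1
      ring

-- commutation of Psum/Qsum with the (w-x)-binomial sums
lemma Psum_bsum_comm (n : ℤ) (K M : ℕ) (H : ℤ → ℤ → ℤ → V) (m k : ℤ) :
    bsum M (fun y z => Psum n K H y z) m k = Psum n K ((Tz^M) H) m k := by
  unfold bsum Psum
  calc ∑ i ∈ Finset.range (M+1), ((-1:ℤ)^i * (M.choose i : ℤ)) •
        (fun y z => ∑ j ∈ Finset.range K, ((-1:ℤ)^j * Ring.choose n j) • H (n - j) (y + j) z)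
          (m + M - i) (k + i)
      = ∑ i ∈ Finset.range (M+1), ∑ j ∈ Finset.range K, ((-1:ℤ)^i * (M.choose i : ℤ)) •
          ((-1:ℤ)^j * Ring.choose n j) • H (n - j) (m + M - i + j) (k + i) := by
        refine Finset.sum_congr rfl fun i hi => ?_
        beta_reduce
        rw [Finset.smul_sum]
    _ = ∑ j ∈ Finset.range K, ∑ i ∈ Finset.range (M+1), ((-1:ℤ)^j * Ring.choose n j) •
          ((-1:ℤ)^i * (M.choose i : ℤ)) • H (n - j) (m + j + M - i) (k + i) := by
        rw [Finset.sum_comm]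
        refine Finset.sum_congr rfl fun j hj => Finset.sum_congr rfl fun i hi => ?_
        rw [smul_comm]
        have : m + (M:ℤ) - i + j = m + j + M - i := by ring
        rw [this]
    _ = ∑ j ∈ Finset.range K, ((-1:ℤ)^j * Ring.choose n j) • ((Tz^M) H) (n - j) (m + j) k := by
        refine Finset.sum_congr rfl fun j hj => ?_
        rw [T_pow_eval M H (n - j) (m + j) k]
        unfold bsum
        rw [Finset.smul_sum]

lemma Qsum_bsum_comm (n : ℤ) (K M : ℕ) (H : ℤ → ℤ → ℤ → V) (m k : ℤ) :
    bsum M (fun y z => Qsum n K H y z) m k = Qsum n K ((Tz^M) H) m k := by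
  unfold bsum Qsum
  calc ∑ i ∈ Finset.range (M+1), ((-1:ℤ)^i * (M.choose i : ℤ)) •
        (fun y z => ∑ j ∈ Finset.range K, ((-1:ℤ)^j * Ring.choose n j) • H j (y + n - j) z)
          (m + M - i) (k + i)
      = ∑ i ∈ Finset.range (M+1), ∑ j ∈ Finset.range K, ((-1:ℤ)^i * (M.choose i : ℤ)) •
          ((-1:ℤ)^j * Ring.choose n j) • H j (m + M - i + n - j) (k + i) := by
        refine Finset.sum_congr rfl fun i hi => ?_
        beta_reduce
        rw [Finset.smul_sum]
    _ = ∑ j ∈ Finset.range K, ∑ i ∈ Finset.range (M+1), ((-1:ℤ)^j * Ring.choose n j) •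
          ((-1:ℤ)^i * (M.choose i : ℤ)) • H j (m + n - j + M - i) (k + i) := by
        rw [Finset.sum_comm]
        refine Finset.sum_congr rfl fun j hj => Finset.sum_congr rfl fun i hi => ?_
        rw [smul_comm]
        have : m + (M:ℤ) - i + n - j = m + n - j + M - i := by ring
        rw [this]
    _ = ∑ j ∈ Finset.range K, ((-1:ℤ)^j * Ring.choose n j) • ((Tz^M) H) j (m + n - j) k := by
        refine Finset.sum_congr rfl fun j hj => ?_
        rw [T_pow_eval M H j (m + n - j) k]
        unfold bsum
        rw [Finset.smul_sum]


def Uz : AddMonoid.End (ℤ → ℤ → ℤ → V) := S2 - S1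

lemma Uz_eq_neg_Dz :
    (Uz : AddMonoid.End (ℤ → ℤ → ℤ → V)) = -(Dz : AddMonoid.End (ℤ → ℤ → ℤ → V)) := by
  unfold Uz Dz; abel

lemma Uz_add_Vz : (Uz : AddMonoid.End (ℤ → ℤ → ℤ → V)) + Vz = Tz := sub_add_sub_cancel _ _ _

lemma Uz_apply (h : ℤ → ℤ → ℤ → V) (p q r : ℤ) :
    Uz h p q r = h p (q+1) r - h (p+1) q r := rfl

lemma commute_UV : Commute (Uz : AddMonoid.End (ℤ → ℤ → ℤ → V)) Vz := by
  apply AddMonoidHom.ext; intro h; funext p q r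
  show Uz (Vz h) p q r = Vz (Uz h) p q r
  simp only [Uz_apply, Vz_apply]; abel

section Endo

variable {F : Type*} [Field F] {W : Type*} [AddCommGroup W] [Module F W]

/-- evaluation at a vector, as an additive monoid hom -/
def applyHom (u : W) : Module.End F W →+ W :=
  AddMonoidHom.mk' (fun X => X u) (fun _ _ => rfl)

lemma applyHom_apply (u : W) (X : Module.End F W) : applyHom u X = X u := rfl

lemma bsum_comp {V' W' : Type*} [AddCommGroup V'] [AddCommGroup W'] (L : V' →+ W')
    (N : ℕ) (g : ℤ → ℤ → V') (p q : ℤ) :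
    bsum N (fun x y => L (g x y)) p q = L (bsum N g p q) := by
  unfold bsum
  rw [map_sum]
  exact Finset.sum_congr rfl fun j hj => (map_zsmul L _ _).symm

lemma comm_key (A B C : Module.End F W) (v : W) :
    A (B (C v)) - C (A (B v)) = A (⁅B, C⁆ v) + ⁅A, C⁆ (B v) := by
  simp only [Ring.lie_def, LinearMap.sub_apply, Module.End.mul_apply, map_sub]
  abel

end Endo

end DongAux

open DongAux in
/-- Dong's lemma.  Let `a(w), b(w), c(w)` be pairwise mutually local quantum
fields on a vector space `V` (locality meaning vanishing of all coefficients
of `(z−w)^N[a(z),b(w)]`).  Let `d(w) = a(w)_{(n)}b(w)` be their `n`-th product,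
defined coefficientwise via the residue formula (the partial sums stabilise
pointwise since `a, b` are quantum fields).  Then `d(w)` and `c(w)` are
mutually local. -/
theorem dong_lemma
    {F V : Type*} [Field F] [AddCommGroup V] [Module F V]
    (a b c : ℤ → Module.End F V)
    -- quantum field conditions
    (ha : ∀ v : V, ∃ N : ℤ, ∀ m : ℤ, N ≤ m → a m v = 0)
    (hb : ∀ v : V, ∃ N : ℤ, ∀ m : ℤ, N ≤ m → b m v = 0)
    (hc : ∀ v : V, ∃ N : ℤ, ∀ m : ℤ, N ≤ m → c m v = 0)
    -- pairwise mutual locality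
    (hab : ∃ N : ℕ, ∀ m k : ℤ,
      ∑ j ∈ Finset.range (N + 1), ((-1 : ℤ) ^ j * (N.choose j : ℤ)) •
        ⁅a (m + N - j), b (k + j)⁆ = 0)
    (hac : ∃ N : ℕ, ∀ m k : ℤ,
      ∑ j ∈ Finset.range (N + 1), ((-1 : ℤ) ^ j * (N.choose j : ℤ)) •
        ⁅a (m + N - j), c (k + j)⁆ = 0)
    (hbc : ∃ N : ℕ, ∀ m k : ℤ,
      ∑ j ∈ Finset.range (N + 1), ((-1 : ℤ) ^ j * (N.choose j : ℤ)) •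
        ⁅b (m + N - j), c (k + j)⁆ = 0)
    (n : ℤ)
    -- `d = a(w)_{(n)} b(w)`, the n-th product, defined coefficientwise and
    -- pointwise by the residue formula
    (d : ℤ → Module.End F V)
    (hd : ∀ (m : ℤ) (v : V), ∃ J : ℕ, ∀ K : ℕ, J ≤ K →
      d m v =
        (∑ j ∈ Finset.range K, ((-1 : ℤ) ^ j * Ring.choose n j) •
            a (n - j) (b (m + j) v))
        - (n.negOnePow : ℤ) • ∑ j ∈ Finset.range K,
            ((-1 : ℤ) ^ j * Ring.choose n j) • b (m + n - j) (a j v)) :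
    -- conclusion : `d(w)` and `c(w)` are mutually local
    ∃ N : ℕ, ∀ m k : ℤ,
      ∑ j ∈ Finset.range (N + 1), ((-1 : ℤ) ^ j * (N.choose j : ℤ)) •
        ⁅d (m + N - j), c (k + j)⁆ = 0 := by
  classical
  letI : LieRing (Module.End F V) := LieRing.ofAssociativeRing
  obtain ⟨Nab, hab⟩ := hab
  obtain ⟨Nac, hac⟩ := hac
  obtain ⟨Nbc, hbc⟩ := hbc
  set N₀ : ℕ := max (max Nab Nac) Nbc with hN₀
  have habN : ∀ p q : ℤ, bsum N₀ (fun x y => ⁅a x, b y⁆) p q = 0 :=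
    bsum_zero_of_le (le_trans (le_max_left _ _) (le_max_left _ _)) _ hab
  have hacN : ∀ p q : ℤ, bsum N₀ (fun x y => ⁅a x, c y⁆) p q = 0 :=
    bsum_zero_of_le (le_trans (le_max_right _ _) (le_max_left _ _)) _ hac
  have hbcN : ∀ p q : ℤ, bsum N₀ (fun x y => ⁅b x, c y⁆) p q = 0 :=
    bsum_zero_of_le (le_max_right _ _) _ hbc
  choose Ja hJa using ha
  choose Jb hJb using hb
  choose Jd hJd using hd
  set t : ℕ := (-n).toNat with ht
  set M' : ℕ := 2 * N₀ + t with hM'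
  set M : ℕ := M' + N₀ with hM
  have htn : -n ≤ (t : ℤ) := Int.self_le_toNat _
  refine ⟨M, fun m k => ?_⟩
  show bsum M (fun y z => ⁅d y, c z⁆) m k = 0
  refine LinearMap.ext fun v => ?_
  rw [LinearMap.zero_apply]
  have hcomp := bsum_comp (applyHom v) M (fun y z => ⁅d y, c z⁆) m k
  show applyHom v (bsum M (fun y z => ⁅d y, c z⁆) m k) = 0
  rw [← hcomp]
  show bsum M (fun y z => ⁅d y, c z⁆ v) m k = 0
  -- goal : bsum M (fun y z => ⁅d y, c z⁆ v) m k = 0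
  set ε : ℤ := (n.negOnePow : ℤ) with hε
  -- the four three-variable distributions
  set H1 : ℤ → ℤ → ℤ → V := fun p y z => a p (⁅b y, c z⁆ v) with hH1
  set H2 : ℤ → ℤ → ℤ → V := fun p y z => ⁅a p, c z⁆ (b y v) with hH2
  set H3 : ℤ → ℤ → ℤ → V := fun p y z => b y (⁅a p, c z⁆ v) with hH3
  set H4 : ℤ → ℤ → ℤ → V := fun p y z => ⁅b y, c z⁆ (a p v) with hH4
  set δE : ℤ → ℤ → ℤ → Module.End F V := fun x w z => ⁅b w, ⁅a x, c z⁆⁆ with hδE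
  set δv : ℤ → ℤ → ℤ → V := fun x w z => ⁅b w, ⁅a x, c z⁆⁆ v with hδv
  -- choice of the truncation bound
  obtain ⟨K, hK1, hK2, hK3, hK4, hK5, hK6⟩ :
      ∃ K : ℕ, (∀ i : ℕ, i ≤ M → Jd (m + M - i) (c (k + i) v) ≤ K + 1) ∧
        (∀ i : ℕ, i ≤ M → Jd (m + M - i) v ≤ K + 1) ∧
        (Jb v ≤ m + K + 1) ∧
        (∀ i : ℕ, i ≤ M → Ja (c (k + i) v) ≤ (K : ℤ) + 1) ∧
        (Ja v ≤ (K : ℤ) + 1) ∧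
        ((n : ℤ) + M' ≤ (K : ℤ)) := by
    refine ⟨((Finset.range (M+1)).sup fun i => Jd (m + M - i) (c (k + i) v)) +
      ((Finset.range (M+1)).sup fun i => Jd (m + M - i) v) +
      (Jb v - m).toNat +
      ((Finset.range (M+1)).sup fun i => (Ja (c (k + i) v)).toNat) +
      (Ja v).toNat + (n + M').toNat, ?_, ?_, ?_, ?_, ?_, ?_⟩
    · intro i hi
      have h0 := Finset.le_sup (s := Finset.range (M+1))
        (f := fun i => Jd (m + M - i) (c (k + i) v))
        (Finset.mem_range.mpr (Nat.lt_succ_of_le hi))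
      omega
    · intro i hi
      have h0 := Finset.le_sup (s := Finset.range (M+1))
        (f := fun i => Jd (m + M - i) v)
        (Finset.mem_range.mpr (Nat.lt_succ_of_le hi))
      omega
    · have h1 : Jb v - m ≤ ((Jb v - m).toNat : ℤ) := Int.self_le_toNat _
      omega
    · intro i hi
      have h1 : Ja (c (k + i) v) ≤ ((Ja (c (k + i) v)).toNat : ℤ) := Int.self_le_toNat _
      have h2 := Finset.le_sup (s := Finset.range (M+1))
        (f := fun i => (Ja (c (k + i) v)).toNat)
        (Finset.mem_range.mpr (Nat.lt_succ_of_le hi))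
      omega
    · have h1 : Ja v ≤ ((Ja v).toNat : ℤ) := Int.self_le_toNat _
      omega
    · have h1 : (n : ℤ) + M' ≤ ((n + M').toNat : ℤ) := Int.self_le_toNat _
      omega
  -- locality applied to vectors
  have hbcNu : ∀ (u : V) (p q : ℤ), bsum N₀ (fun x y => ⁅b x, c y⁆ u) p q = 0 := by
    intro u p q
    have h1 : bsum N₀ (fun x y => ⁅b x, c y⁆ u) p q
        = applyHom u (bsum N₀ (fun x y => ⁅b x, c y⁆) p q) :=
          bsum_comp (applyHom u) N₀ (fun x y => ⁅b x, c y⁆) p q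
    rw [h1, hbcN p q]
    exact map_zero _
  have hacNu : ∀ (u : V) (p q : ℤ), bsum N₀ (fun x y => ⁅a x, c y⁆ u) p q = 0 := by
    intro u p q
    have h1 : bsum N₀ (fun x y => ⁅a x, c y⁆ u) p q
        = applyHom u (bsum N₀ (fun x y => ⁅a x, c y⁆) p q) :=
          bsum_comp (applyHom u) N₀ (fun x y => ⁅a x, c y⁆) p q
    rw [h1, hacN p q]
    exact map_zero _
  -- step 1 : replace d by its truncation on the relevant window
  have hwindow : ∀ i : ℕ, i ≤ M →
      ⁅d (m + M - i), c (k + i)⁆ v =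
        (Psum n (K+1) H1 (m + M - i) (k + i) + Psum n (K+1) H2 (m + M - i) (k + i))
        - ε • (Qsum n (K+1) H3 (m + M - i) (k + i) + Qsum n (K+1) H4 (m + M - i) (k + i)) := by
    intro i hi
    set q' : ℤ := m + (M:ℤ) - i with hq'
    set r' : ℤ := k + (i:ℤ) with hr'
    have e1 : ⁅d q', c r'⁆ v = d q' (c r' v) - c r' (d q' v) := by
      simp [Ring.lie_def, LinearMap.sub_apply, Module.End.mul_apply]
    rw [e1, hJd q' (c r' v) (K+1) (hK1 i hi), hJd q' v (K+1) (hK2 i hi)]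
    rw [map_sub, map_zsmul]
    have h3 : c r' (∑ j ∈ Finset.range (K+1),
        ((-1:ℤ)^j * Ring.choose n j) • a (n - j) (b (q' + j) v))
        = ∑ j ∈ Finset.range (K+1),
            ((-1:ℤ)^j * Ring.choose n j) • c r' (a (n - j) (b (q' + j) v)) := by
      rw [map_sum]
      exact Finset.sum_congr rfl fun j _ => map_zsmul _ _ _
    have h4 : c r' (∑ j ∈ Finset.range (K+1),
        ((-1:ℤ)^j * Ring.choose n j) • b (q' + n - j) (a j v))
        = ∑ j ∈ Finset.range (K+1),
            ((-1:ℤ)^j * Ring.choose n j) • c r' (b (q' + n - j) (a j v)) := by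
      rw [map_sum]
      exact Finset.sum_congr rfl fun j _ => map_zsmul _ _ _
    rw [h3, h4]
    have h13 : ∑ j ∈ Finset.range (K+1),
          ((-1:ℤ)^j * Ring.choose n j) • a (n - j) (b (q' + j) (c r' v))
        - ∑ j ∈ Finset.range (K+1),
            ((-1:ℤ)^j * Ring.choose n j) • c r' (a (n - j) (b (q' + j) v))
        = Psum n (K+1) H1 q' r' + Psum n (K+1) H2 q' r' := by
      rw [← Finset.sum_sub_distrib]
      have hterm : ∀ j ∈ Finset.range (K+1),
          ((-1:ℤ)^j * Ring.choose n j) • a (n - j) (b (q' + j) (c r' v))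
          - ((-1:ℤ)^j * Ring.choose n j) • c r' (a (n - j) (b (q' + j) v))
          = ((-1:ℤ)^j * Ring.choose n j) • H1 (n - j) (q' + j) r'
            + ((-1:ℤ)^j * Ring.choose n j) • H2 (n - j) (q' + j) r' := by
        intro j _
        rw [← smul_sub, ← smul_add]
        congr 1
        simp only [hH1, hH2]
        exact comm_key (a (n - j)) (b (q' + j)) (c r') v
      rw [Finset.sum_congr rfl hterm, Finset.sum_add_distrib]
      rfl
    have h24 : ∑ j ∈ Finset.range (K+1),
          ((-1:ℤ)^j * Ring.choose n j) • b (q' + n - j) (a j (c r' v))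
        - ∑ j ∈ Finset.range (K+1),
            ((-1:ℤ)^j * Ring.choose n j) • c r' (b (q' + n - j) (a j v))
        = Qsum n (K+1) H3 q' r' + Qsum n (K+1) H4 q' r' := by
      rw [← Finset.sum_sub_distrib]
      have hterm : ∀ j ∈ Finset.range (K+1),
          ((-1:ℤ)^j * Ring.choose n j) • b (q' + n - j) (a j (c r' v))
          - ((-1:ℤ)^j * Ring.choose n j) • c r' (b (q' + n - j) (a j v))
          = ((-1:ℤ)^j * Ring.choose n j) • H3 j (q' + n - j) r'
            + ((-1:ℤ)^j * Ring.choose n j) • H4 j (q' + n - j) r' := by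
        intro j _
        rw [← smul_sub, ← smul_add]
        congr 1
        simp only [hH3, hH4]
        exact comm_key (b (q' + n - j)) (a j) (c r') v
      rw [Finset.sum_congr rfl hterm, Finset.sum_add_distrib]
      rfl
    rw [← h13, ← h24, smul_sub]
    abel
  -- step 2 : rewrite the goal using the window identity and push through
  have hmain : bsum M (fun y z => ⁅d y, c z⁆ v) m k =
      (Psum n (K+1) ((Tz^M) H1) m k + Psum n (K+1) ((Tz^M) H2) m k)
      - ε • (Qsum n (K+1) ((Tz^M) H3) m k + Qsum n (K+1) ((Tz^M) H4) m k) := by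
    have hw : bsum M (fun y z => ⁅d y, c z⁆ v) m k
        = bsum M (fun y z =>
            (Psum n (K+1) H1 y z + Psum n (K+1) H2 y z)
            - ε • (Qsum n (K+1) H3 y z + Qsum n (K+1) H4 y z)) m k :=
      bsum_congr_window M _ _ m k (fun i hi => hwindow i hi)
    rw [hw]
    have hsplit1 : bsum M (fun y z =>
          (Psum n (K+1) H1 y z + Psum n (K+1) H2 y z)
          - ε • (Qsum n (K+1) H3 y z + Qsum n (K+1) H4 y z)) m k
        = bsum M (fun y z => Psum n (K+1) H1 y z + Psum n (K+1) H2 y z) m k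
          - bsum M (fun y z => ε • (Qsum n (K+1) H3 y z + Qsum n (K+1) H4 y z)) m k :=
      bsum_sub M _ _ m k
    rw [hsplit1, bsum_add M _ _ m k, bsum_zsmul M ε _ m k, bsum_add M _ _ m k]
    rw [Psum_bsum_comm, Psum_bsum_comm, Qsum_bsum_comm, Qsum_bsum_comm]
  -- step 3 : pieces 1 and 4 vanish thanks to (b,c)-locality
  have hT1 : (Tz^N₀) H1 = 0 := by
    funext p q r
    show ((Tz^N₀) H1) p q r = 0
    rw [T_pow_eval]
    have : ∀ y z : ℤ, H1 p y z = (a p).toAddMonoidHom (⁅b y, c z⁆ v) := fun _ _ => rfl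
    calc bsum N₀ (fun y z => H1 p y z) q r
        = bsum N₀ (fun y z => (a p).toAddMonoidHom (⁅b y, c z⁆ v)) q r := by rfl
      _ = (a p).toAddMonoidHom (bsum N₀ (fun y z => ⁅b y, c z⁆ v) q r) :=
          bsum_comp ((a p).toAddMonoidHom) N₀ _ q r
      _ = 0 := by rw [hbcNu v q r]; exact map_zero _
  have hT4 : (Tz^N₀) H4 = 0 := by
    funext p q r
    show ((Tz^N₀) H4) p q r = 0
    rw [T_pow_eval]
    exact hbcNu (a p v) q r
  have piece1 : Psum n (K+1) ((Tz^M) H1) m k = 0 := by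
    have h1 : (Tz^M) H1 = (Tz^M') ((Tz^N₀) H1) := by rw [hM, pow_add]; rfl
    rw [h1, hT1, map_zero, Psum_zero]
  have piece4 : Qsum n (K+1) ((Tz^M) H4) m k = 0 := by
    have h4 : (Tz^M) H4 = (Tz^M') ((Tz^N₀) H4) := by rw [hM, pow_add]; rfl
    rw [h4, hT4, map_zero, Qsum_zero]
  -- step 4 : the mixed pieces 2 and 3
  -- the key Jacobi/locality cancellation
  have claimC : (Tz^N₀) ((Dz^N₀) δv) = 0 := by
    funext p q r
    show ((Tz^N₀) ((Dz^N₀) δv)) p q r = 0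
    rw [T_pow_eval]
    have hin : ∀ y z : ℤ, ((Dz^N₀) δv) p y z
        = applyHom v (bsum N₀ (fun x w => ⁅b w, ⁅a x, c z⁆⁆) p y) := by
      intro y z
      rw [D_pow_eval]
      exact bsum_comp (applyHom v) N₀ (fun x w => ⁅b w, ⁅a x, c z⁆⁆) p y
    have hjac : ∀ y z : ℤ, bsum N₀ (fun x w => ⁅b w, ⁅a x, c z⁆⁆) p y
        = bsum N₀ (fun x w => ⁅a x, ⁅b w, c z⁆⁆) p y := by
      intro y z
      have hsp : bsum N₀ (fun x w => ⁅b w, ⁅a x, c z⁆⁆) p y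
          = bsum N₀ (fun x w => ⁅⁅b w, a x⁆, c z⁆ + ⁅a x, ⁅b w, c z⁆⁆) p y :=
        bsum_congr N₀ (fun x w => leibniz_lie (b w) (a x) (c z)) p y
      rw [hsp, bsum_add]
      have hz1 : bsum N₀ (fun x w => ⁅⁅b w, a x⁆, c z⁆) p y = 0 := by
        have lieR : Module.End F V →+ Module.End F V :=
          AddMonoidHom.mk' (fun X => ⁅X, c z⁆) (fun X Y => add_lie X Y (c z))
        have hcmp : bsum N₀ (fun x w => ⁅⁅b w, a x⁆, c z⁆) p y
            = ⁅bsum N₀ (fun x w => ⁅b w, a x⁆) p y, c z⁆ :=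
          bsum_comp (AddMonoidHom.mk' (fun X => ⁅X, c z⁆) (fun X Y => add_lie X Y (c z)))
            N₀ (fun x w => ⁅b w, a x⁆) p y
        have hskew : bsum N₀ (fun x w => ⁅b w, a x⁆) p y
            = -(bsum N₀ (fun x w => ⁅a x, b w⁆) p y) := by
          rw [← bsum_neg]
          exact bsum_congr N₀ (fun x w => (lie_skew (b w) (a x)).symm) p y
        rw [hcmp, hskew, habN p y, neg_zero, zero_lie]
      rw [hz1, zero_add]
    have houter : bsum N₀ (fun y z => ((Dz^N₀) δv) p y z) q r
        = applyHom v (bsum N₀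
            (fun y z => bsum N₀ (fun x w => ⁅a x, ⁅b w, c z⁆⁆) p y) q r) := by
      have h1 : bsum N₀ (fun y z => ((Dz^N₀) δv) p y z) q r
          = bsum N₀ (fun y z =>
              applyHom v (bsum N₀ (fun x w => ⁅a x, ⁅b w, c z⁆⁆) p y)) q r :=
        bsum_congr N₀ (fun y z => by rw [hin y z, hjac y z]) q r
      rw [h1]
      exact bsum_comp (applyHom v) N₀ _ q r
    rw [houter]
    have hdouble : bsum N₀
        (fun y z => bsum N₀ (fun x w => ⁅a x, ⁅b w, c z⁆⁆) p y) q r = 0 := by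
      unfold bsum
      have hstep1 : ∀ l' ∈ Finset.range (N₀+1),
          ((-1:ℤ)^l' * (N₀.choose l' : ℤ)) • ∑ i ∈ Finset.range (N₀+1),
              ((-1:ℤ)^i * (N₀.choose i : ℤ)) •
                ⁅a (p + N₀ - i), ⁅b ((q + N₀ - l') + i), c (r + l')⁆⁆
          = ∑ i ∈ Finset.range (N₀+1), ((-1:ℤ)^i * (N₀.choose i : ℤ)) •
              ((-1:ℤ)^l' * (N₀.choose l' : ℤ)) •
                ⁅a (p + N₀ - i), ⁅b ((q + N₀ - l') + i), c (r + l')⁆⁆ := by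
        intro l' _
        rw [Finset.smul_sum]
        exact Finset.sum_congr rfl fun i _ => smul_comm _ _ _
      rw [Finset.sum_congr rfl hstep1, Finset.sum_comm]
      refine Finset.sum_eq_zero fun i _ => ?_
      rw [← Finset.smul_sum]
      have hpull : ∑ l' ∈ Finset.range (N₀+1), ((-1:ℤ)^l' * (N₀.choose l' : ℤ)) •
            ⁅a (p + N₀ - i), ⁅b ((q + N₀ - l') + i), c (r + l')⁆⁆
          = ⁅a (p + N₀ - i), ∑ l' ∈ Finset.range (N₀+1),
              ((-1:ℤ)^l' * (N₀.choose l' : ℤ)) • ⁅b ((q + N₀ - l') + i), c (r + l')⁆⁆ := by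
        set L : Module.End F V →+ Module.End F V :=
          AddMonoidHom.mk' (fun X => ⁅a (p + N₀ - i), X⁆) (fun X Y => lie_add _ X Y) with hL
        calc ∑ l' ∈ Finset.range (N₀+1), ((-1:ℤ)^l' * (N₀.choose l' : ℤ)) •
              ⁅a (p + N₀ - i), ⁅b ((q + N₀ - l') + i), c (r + l')⁆⁆
            = ∑ l' ∈ Finset.range (N₀+1),
                L (((-1:ℤ)^l' * (N₀.choose l' : ℤ)) • ⁅b ((q + N₀ - l') + i), c (r + l')⁆) :=
              Finset.sum_congr rfl fun l' _ => (map_zsmul L _ _).symm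
          _ = L (∑ l' ∈ Finset.range (N₀+1),
                ((-1:ℤ)^l' * (N₀.choose l' : ℤ)) • ⁅b ((q + N₀ - l') + i), c (r + l')⁆) :=
              (map_sum L _ _).symm
      rw [hpull]
      have hargs : ∑ l' ∈ Finset.range (N₀+1), ((-1:ℤ)^l' * (N₀.choose l' : ℤ)) •
            ⁅b ((q + N₀ - l') + i), c (r + l')⁆
          = bsum N₀ (fun y z => ⁅b y, c z⁆) (q + i) r := by
        unfold bsum
        refine Finset.sum_congr rfl fun l' _ => ?_
        have : (q + (N₀:ℤ) - l') + i = (q + i) + N₀ - l' := by ring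
        rw [this]
      rw [hargs, hbcN (q + i) r, lie_zero, smul_zero]
    rw [hdouble]
    exact map_zero _
  -- vanishing conditions for the telescopes
  have hvan2 : ∀ e : ℕ, ∀ p Q r' : ℤ, m + (K:ℤ) + 1 ≤ Q →
      ((Vz^e) ((Tz^N₀) H2)) p Q r' = 0 := by
    intro e p Q r' hQ
    rw [Vx_pow_eval]
    unfold bsum
    refine Finset.sum_eq_zero fun i _ => ?_
    beta_reduce
    have h1 : ((Tz^N₀) H2) (p + e - i) Q (r' + i) = 0 := by
      rw [T_pow_eval]
      unfold bsum
      refine Finset.sum_eq_zero fun l' hl' => ?_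
      beta_reduce
      have hl'N : l' ≤ N₀ := by simpa [Nat.lt_succ_iff] using hl'
      have hb0 : b (Q + N₀ - l') v = 0 := by
        refine hJb v _ ?_
        have : (l' : ℤ) ≤ (N₀ : ℤ) := by exact_mod_cast hl'N
        omega
      have hz : H2 (p + e - i) (Q + N₀ - l') (r' + i + l') = 0 := by
        simp only [hH2]
        rw [hb0]
        exact map_zero _
      rw [hz, smul_zero]
    rw [h1, smul_zero]
  have hvan3 : ∀ e : ℕ, e ≤ M' → ∀ P Q : ℤ, (K:ℤ) + 1 ≤ P →
      ((Vz^e) ((Tz^N₀) H3)) P Q k = 0 := by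
    intro e he P Q hP
    rw [Vx_pow_eval]
    unfold bsum
    refine Finset.sum_eq_zero fun i hi => ?_
    beta_reduce
    have hiN : i ≤ e := by simpa [Nat.lt_succ_iff] using hi
    have h1 : ((Tz^N₀) H3) (P + e - i) Q (k + i) = 0 := by
      rw [T_pow_eval]
      unfold bsum
      refine Finset.sum_eq_zero fun l' hl' => ?_
      beta_reduce
      have hl'N : l' ≤ N₀ := by simpa [Nat.lt_succ_iff] using hl'
      have hlie0 : ⁅a (P + e - i), c (k + i + l')⁆ v = 0 := by
        have hiZ : (i : ℤ) ≤ (e : ℤ) := by exact_mod_cast hiN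
        have hx : (K:ℤ) + 1 ≤ P + (e:ℤ) - i := by omega
        have hargw : (k + (i:ℤ) + l') = k + ((i + l' : ℕ) : ℤ) := by push_cast; ring
        have hi'M : i + l' ≤ M := by
          have heZ : e ≤ M' := he
          omega
        have ha1 : a (P + e - i) (c (k + (i:ℤ) + l') v) = 0 := by
          rw [hargw]
          refine hJa _ _ ?_
          have h4 := hK4 (i + l') hi'M
          omega
        have ha2 : a (P + e - i) v = 0 := hJa v _ (by omega)
        rw [Ring.lie_def, LinearMap.sub_apply, Module.End.mul_apply, Module.End.mul_apply,
          ha1, ha2, map_zero, sub_zero]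
      have hz : H3 (P + e - i) (Q + N₀ - l') (k + i + l') = 0 := by
        simp only [hH3]
        rw [hlie0]
        exact map_zero _
      rw [hz, smul_zero]
    rw [h1, smul_zero]
  have hTM : ∀ g : ℤ → ℤ → ℤ → V, (Tz^M) g = ∑ s ∈ Finset.range (M'+1),
      ((M'.choose s : ℤ)) • ((Uz^s) ((Vz^(M'-s)) ((Tz^N₀) g))) := by
    intro g
    have h1 : (Tz^M) g = (Tz^M') ((Tz^N₀) g) := by rw [hM, pow_add]; rfl
    have h2 : (Tz^M' : AddMonoid.End (ℤ→ℤ→ℤ→V)) = ∑ s ∈ Finset.range (M'+1),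
        (Uz^s) * (Vz^(M'-s)) * ((M'.choose s : ℕ) : AddMonoid.End (ℤ→ℤ→ℤ→V)) := by
      rw [← Uz_add_Vz, commute_UV.add_pow]
    rw [h1, h2]
    erw [AddMonoidHom.finset_sum_apply]
    refine Finset.sum_congr rfl fun s hs => ?_
    show (Uz^s) ((Vz^(M'-s)) (((M'.choose s : ℕ) : AddMonoid.End _) ((Tz^N₀) g))) = _
    rw [AddMonoid.End.natCast_apply, map_nsmul, map_nsmul, ← natCast_zsmul]
  have piece23 : Psum n (K+1) ((Tz^M) H2) m k - ε • Qsum n (K+1) ((Tz^M) H3) m k = 0 := by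
    rw [hTM H2, hTM H3, Psum_finsum, Qsum_finsum, Finset.smul_sum, ← Finset.sum_sub_distrib]
    refine Finset.sum_eq_zero fun s hs => ?_
    have hsM : s ≤ M' := by simpa [Nat.lt_succ_iff] using hs
    rw [smul_comm ε, ← smul_sub]
    suffices hzz : Psum n (K+1) ((Uz^s) ((Vz^(M'-s)) ((Tz^N₀) H2))) m k
        - ε • Qsum n (K+1) ((Uz^s) ((Vz^(M'-s)) ((Tz^N₀) H3))) m k = 0 by
      rw [hzz, smul_zero]
    by_cases hcase : N₀ ≤ M' - s
    · -- the power of (z-x) is big : use (a,c)-locality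
      have hsplit : ∀ g : ℤ → ℤ → ℤ → V,
          (Vz^(M'-s)) ((Tz^N₀) g) = (Vz^(M'-s-N₀)) ((Tz^N₀) ((Vz^N₀) g)) := by
        intro g
        have he : M' - s = (M' - s - N₀) + N₀ := by omega
        have h1 : (Vz^(M'-s) : AddMonoid.End (ℤ→ℤ→ℤ→V)) * (Tz^N₀)
            = (Vz^(M'-s-N₀)) * ((Tz^N₀) * (Vz^N₀)) := by
          calc (Vz^(M'-s) : AddMonoid.End (ℤ→ℤ→ℤ→V)) * (Tz^N₀)
              = (Vz^((M'-s-N₀) + N₀)) * (Tz^N₀) := by rw [← he]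
            _ = (Vz^(M'-s-N₀)) * (Vz^N₀) * (Tz^N₀) := by rw [pow_add]
            _ = (Vz^(M'-s-N₀)) * ((Vz^N₀) * (Tz^N₀)) := by rw [mul_assoc]
            _ = (Vz^(M'-s-N₀)) * ((Tz^N₀) * (Vz^N₀)) := by
                rw [(commute_VT.pow_pow N₀ N₀).eq]
        exact DFunLike.congr_fun h1 g
      have hV2 : (Vz^N₀) H2 = 0 := by
        funext p q r
        show ((Vz^N₀) H2) p q r = 0
        rw [Vx_pow_eval]
        exact hacNu (b q v) p r
      have hV3 : (Vz^N₀) H3 = 0 := by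
        funext p q r
        show ((Vz^N₀) H3) p q r = 0
        rw [Vx_pow_eval]
        have hcmp : bsum N₀ (fun x z => H3 x q z) p r
            = (b q).toAddMonoidHom (bsum N₀ (fun x z => ⁅a x, c z⁆ v) p r) :=
          bsum_comp ((b q).toAddMonoidHom) N₀ (fun x z => ⁅a x, c z⁆ v) p r
        rw [hcmp, hacNu v p r]
        exact map_zero _
      rw [hsplit H2, hsplit H3, hV2, hV3]
      simp only [map_zero]
      rw [Psum_zero, Qsum_zero, smul_zero, sub_zero]
    · -- the power of (w-z) is big : telescope and use Jacobi
      have hsN : N₀ + t ≤ s := by omega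
      have hU2 : (Uz^s) ((Vz^(M'-s)) ((Tz^N₀) H2))
          = ((-1:ℤ)^s) • ((Dz^s) ((Vz^(M'-s)) ((Tz^N₀) H2))) := by
        rw [Uz_eq_neg_Dz]; exact neg_end_pow Dz s _
      have hU3 : (Uz^s) ((Vz^(M'-s)) ((Tz^N₀) H3))
          = ((-1:ℤ)^s) • ((Dz^s) ((Vz^(M'-s)) ((Tz^N₀) H3))) := by
        rw [Uz_eq_neg_Dz]; exact neg_end_pow Dz s _
      rw [hU2, hU3, Psum_zsmul, Qsum_zsmul]
      rw [Psum_tele s n K _ m k (fun p Q r' hQ => hvan2 (M'-s) p Q r' hQ)]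
      rw [Qsum_tele s n K _ m k (fun P Q hP => hvan3 (M'-s) (by omega) P Q hP)]
      have hsq : ((-1:ℤ)^s) * ((-1:ℤ)^s) = 1 := by
        rw [← pow_add, ← two_mul, pow_mul]
        norm_num
      obtain ⟨l, hl, hlK, hlN⟩ : ∃ l : ℕ, ((l:ℕ):ℤ) = n + (s:ℤ) ∧ l + 1 ≤ K + 1 ∧ N₀ ≤ l := by
        refine ⟨(n + (s:ℤ)).toNat, Int.toNat_of_nonneg (by omega), ?_, ?_⟩
        · have h1 : (((n + (s:ℤ)).toNat : ℕ) : ℤ) = n + (s:ℤ) := Int.toNat_of_nonneg (by omega)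
          have h2 : (s:ℤ) ≤ (M':ℤ) := by exact_mod_cast hsM
          omega
        · have h1 : (((n + (s:ℤ)).toNat : ℕ) : ℤ) = n + (s:ℤ) := Int.toNat_of_nonneg (by omega)
          have h2 : (N₀:ℤ) + t ≤ (s:ℤ) := by exact_mod_cast hsN
          omega
      rw [← hl]
      rw [Psum_fin l (K+1) hlK _ m k]
      have hdup : ((-1:ℤ)^s) • (((-1:ℤ)^s) •
            Qsum (l:ℤ) (K+1) ((Vz^(M'-s)) ((Tz^N₀) H3)) m k)
          = Qsum (l:ℤ) (K+1) ((Vz^(M'-s)) ((Tz^N₀) H3)) m k := by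
        rw [smul_smul, hsq, one_smul]
      rw [hdup]
      have hεQ : ε • Qsum (l:ℤ) (K+1) ((Vz^(M'-s)) ((Tz^N₀) H3)) m k
          = ((-1:ℤ)^s) • bsum l (fun x y => ((Vz^(M'-s)) ((Tz^N₀) H3)) x y k) 0 m := by
        rw [← Qsum_fin l (K+1) hlK ((Vz^(M'-s)) ((Tz^N₀) H3)) m k, smul_smul]
        congr 1
        rw [hε, hl, Int.negOnePow_add, Units.val_mul]
        have hns : (((s:ℤ).negOnePow : ℤ)) = (-1:ℤ)^s := Int.coe_negOnePow_natCast s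
        rw [hns]
        have hmv : ((-1:ℤ)^s) * ((n.negOnePow : ℤ) * (-1:ℤ)^s)
            = (n.negOnePow : ℤ) * (((-1:ℤ)^s) * (-1:ℤ)^s) := by ring
        rw [hmv, hsq, mul_one]
      rw [hεQ, ← smul_sub]
      have hPQ : bsum l (fun x y => ((Vz^(M'-s)) ((Tz^N₀) H2)) x y k) 0 m
          - bsum l (fun x y => ((Vz^(M'-s)) ((Tz^N₀) H3)) x y k) 0 m = 0 := by
        rw [← bsum_sub]
        have h23 : H2 - H3 = -δv := by
          funext p' y' z'
          show H2 p' y' z' - H3 p' y' z' = -(δv p' y' z')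
          simp only [hH2, hH3, hδv]
          rw [show ⁅b y', ⁅a p', c z'⁆⁆ = b y' * ⁅a p', c z'⁆ - ⁅a p', c z'⁆ * b y' from
            Ring.lie_def _ _]
          rw [LinearMap.sub_apply, Module.End.mul_apply, Module.End.mul_apply]
          abel
        have hfun : (Vz^(M'-s)) ((Tz^N₀) H2) - (Vz^(M'-s)) ((Tz^N₀) H3)
            = -((Vz^(M'-s)) ((Tz^N₀) δv)) := by
          rw [← map_sub, ← map_sub, h23, map_neg, map_neg]
        have hdiff : ∀ x y : ℤ,
            ((Vz^(M'-s)) ((Tz^N₀) H2)) x y k - ((Vz^(M'-s)) ((Tz^N₀) H3)) x y k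
            = -(((Vz^(M'-s)) ((Tz^N₀) δv)) x y k) := by
          intro x y
          calc ((Vz^(M'-s)) ((Tz^N₀) H2)) x y k - ((Vz^(M'-s)) ((Tz^N₀) H3)) x y k
              = ((Vz^(M'-s)) ((Tz^N₀) H2) - (Vz^(M'-s)) ((Tz^N₀) H3)) x y k := rfl
            _ = (-((Vz^(M'-s)) ((Tz^N₀) δv))) x y k := by rw [hfun]
            _ = -(((Vz^(M'-s)) ((Tz^N₀) δv)) x y k) := rfl
        rw [bsum_congr l hdiff 0 m, bsum_neg]
        have hDW : bsum l (fun x y => ((Vz^(M'-s)) ((Tz^N₀) δv)) x y k) 0 m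
            = ((Dz^l) ((Vz^(M'-s)) ((Tz^N₀) δv))) 0 m k := (D_pow_eval l _ 0 m k).symm
        rw [hDW]
        obtain ⟨l', hl'⟩ : ∃ l', l = l' + N₀ := ⟨l - N₀, by omega⟩
        have c1 : (Dz^N₀ : AddMonoid.End (ℤ→ℤ→ℤ→V)) * (Vz^(M'-s))
            = (Vz^(M'-s)) * (Dz^N₀) := (commute_DV.pow_pow _ _).eq
        have c2 : (Dz^l' : AddMonoid.End (ℤ→ℤ→ℤ→V)) * (Vz^(M'-s))
            = (Vz^(M'-s)) * (Dz^l') := (commute_DV.pow_pow _ _).eq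
        have c3 : (Dz^N₀ : AddMonoid.End (ℤ→ℤ→ℤ→V)) * (Tz^N₀)
            = (Tz^N₀) * (Dz^N₀) := (commute_DT.pow_pow _ _).eq
        have hEnd : (Dz^l : AddMonoid.End (ℤ→ℤ→ℤ→V)) * (Vz^(M'-s)) * (Tz^N₀)
            = (Vz^(M'-s)) * ((Dz^l') * ((Tz^N₀) * (Dz^N₀))) := by
          calc (Dz^l : AddMonoid.End (ℤ→ℤ→ℤ→V)) * (Vz^(M'-s)) * (Tz^N₀)
              = (Dz^l') * (Dz^N₀) * (Vz^(M'-s)) * (Tz^N₀) := by rw [hl', pow_add]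
            _ = (Dz^l') * ((Dz^N₀) * (Vz^(M'-s))) * (Tz^N₀) := by
                rw [mul_assoc (Dz^l' : AddMonoid.End (ℤ→ℤ→ℤ→V))]
            _ = (Dz^l') * ((Vz^(M'-s)) * (Dz^N₀)) * (Tz^N₀) := by rw [c1]
            _ = (Dz^l') * (Vz^(M'-s)) * ((Dz^N₀) * (Tz^N₀)) := by
                rw [← mul_assoc, mul_assoc]
            _ = (Dz^l') * (Vz^(M'-s)) * ((Tz^N₀) * (Dz^N₀)) := by rw [c3]
            _ = (Vz^(M'-s)) * (Dz^l') * ((Tz^N₀) * (Dz^N₀)) := by rw [c2]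
            _ = (Vz^(M'-s)) * ((Dz^l') * ((Tz^N₀) * (Dz^N₀))) := by rw [mul_assoc]
        have happ : ((Dz^l) ((Vz^(M'-s)) ((Tz^N₀) δv)))
            = (Vz^(M'-s)) ((Dz^l') ((Tz^N₀) ((Dz^N₀) δv))) := DFunLike.congr_fun hEnd δv
        rw [happ, claimC, map_zero, map_zero]
        show -((0 : ℤ → ℤ → ℤ → V) 0 m k) = 0
        simp
      rw [hPQ, smul_zero]
  -- conclusion
  rw [hmain, piece1, piece4, zero_add, add_zero]
  exact piece23
end

section
/- Let U be a topological algebra with defining left ideals U_0 ⊇ U_1 ⊇ ···, let a(w), b(w) be continuous distributions on U that are mutually local, and let n ∈ ℤ. Then the n-th product a(w)_{(n)}b(w) = Res_z ( a(z)b(w) i_{z,w}(z−w)^n − b(w)a(z) i_{w,z}(z−w)^n ) is a well-defined continuous distribution on U: each coefficient is a convergent (in the linear topology) sum in U, and for each p ∈ ℤ_{≥0} all but finitely many coefficients lie in U_p. -/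
section aux
variable {U : Type*} [Ring U]

/-- Partial sums of the residue formula for the `n`-th product. -/
def Spart (a b : ℤ → U) (n m : ℤ) (K : ℕ) : U :=
  (∑ j ∈ Finset.range K, ((-1 : ℤ) ^ j * Ring.choose n j) • (a (n - j) * b (m + j)))
    - (n.negOnePow : ℤ) • ∑ j ∈ Finset.range K,
        ((-1 : ℤ) ^ j * Ring.choose n j) • (b (m + n - j) * a j)

lemma mul_mem_left' (Ip : Submodule U U) (u x : U) (hx : x ∈ Ip) : u * x ∈ Ip := by
  simpa [smul_eq_mul] using Ip.smul_mem u hx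

lemma Spart_step (a b : ℤ → U) (n m : ℤ) (K : ℕ) :
    Spart a b n m (K + 1) - Spart a b n m K =
      ((-1 : ℤ) ^ K * Ring.choose n K) • (a (n - K) * b (m + K))
        - (n.negOnePow : ℤ) •
            (((-1 : ℤ) ^ K * Ring.choose n K) • (b (m + n - K) * a K)) := by
  simp only [Spart, Finset.sum_range_succ, smul_add]
  abel
end aux

/-- Let `U` be a topological algebra: a unital associative algebra with a
decreasing family of left ideals `U_0 ⊇ U_1 ⊇ ⋯` with `⋂ U_p = 0`, such that
for every `u` and `p` there is `N` with `U_N u ⊆ U_p`, and which is complete.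
Let `a(w), b(w)` be mutually local continuous distributions on `U` and
`n ∈ ℤ`.  Then the `n`-th product `a(w)_{(n)}b(w)` given by the residue
formula is a well-defined continuous distribution: there is a family of
coefficients `c m` to which the partial sums of the residue formula converge
in the linear topology, and for each `p` all but finitely many `c m` lie in
`U_p`. -/
theorem nth_product_of_continuous_distributions
    {U : Type*} [Ring U] (I : ℕ → Submodule U U)
    (hdec : ∀ p : ℕ, I (p + 1) ≤ I p)
    (hsep : ∀ u : U, (∀ p : ℕ, u ∈ I p) → u = 0)
    (hcont : ∀ (u : U) (p : ℕ), ∃ N : ℕ, ∀ x ∈ I N, x * u ∈ I p)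
    (hcomp : ∀ u : ℕ → U, (∀ p : ℕ, u (p + 1) - u p ∈ I p) →
      ∃ v : U, ∀ p : ℕ, v - u p ∈ I p)
    (a b : ℤ → U)
    -- continuity of the distributions `a(w)` and `b(w)`
    (hca : ∀ p : ℕ, ∃ N : ℤ, ∀ n : ℤ, N ≤ n → a n ∈ I p)
    (hcb : ∀ p : ℕ, ∃ N : ℤ, ∀ n : ℤ, N ≤ n → b n ∈ I p)
    -- mutual locality : `(z−w)^N [a(z), b(w)] = 0`, coefficientwise
    (hloc : ∃ N : ℕ, ∀ m k : ℤ,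
      ∑ j ∈ Finset.range (N + 1), ((-1 : ℤ) ^ j * (N.choose j : ℤ)) •
        (a (m + N - j) * b (k + j) - b (k + j) * a (m + N - j)) = 0)
    (n : ℤ) :
    ∃ c : ℤ → U,
      -- each coefficient is the limit of the partial sums of the residue
      -- formula for `a(w)_{(n)}b(w)`
      (∀ (m : ℤ) (p : ℕ), ∃ J : ℕ, ∀ K : ℕ, J ≤ K →
        c m -
          ((∑ j ∈ Finset.range K, ((-1 : ℤ) ^ j * Ring.choose n j) •
              (a (n - j) * b (m + j)))
            - (n.negOnePow : ℤ) • ∑ j ∈ Finset.range K,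
                ((-1 : ℤ) ^ j * Ring.choose n j) • (b (m + n - j) * a j))
          ∈ I p) ∧
      -- the resulting distribution is continuous
      (∀ p : ℕ, ∃ N : ℤ, ∀ m : ℤ, N ≤ m → c m ∈ I p) := by
  classical
  -- successive differences of partial sums eventually lie in `I p`
  have hstepmem : ∀ (m : ℤ) (p : ℕ), ∃ J : ℕ, ∀ K, J ≤ K →
      Spart a b n m (K + 1) - Spart a b n m K ∈ I p := by
    intro m p
    obtain ⟨Na, hNa⟩ := hca p
    obtain ⟨Nb, hNb⟩ := hcb p
    refine ⟨max Na.toNat (Nb - m).toNat, fun K hK => ?_⟩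
    simp only [max_le_iff] at hK
    obtain ⟨hK1, hK2⟩ := hK
    rw [Spart_step]
    have hb : b (m + K) ∈ I p := hNb _ (by omega)
    have ha : a (K : ℤ) ∈ I p := hNa _ (by omega)
    exact sub_mem (zsmul_mem (mul_mem_left' _ _ _ hb) _)
      (zsmul_mem (zsmul_mem (mul_mem_left' _ _ _ ha) _) _)
  choose Jf hJf using hstepmem
  -- telescoping
  have htel : ∀ (m : ℤ) (p : ℕ) (J : ℕ),
      (∀ L, J ≤ L → Spart a b n m (L + 1) - Spart a b n m L ∈ I p) →
      ∀ K, J ≤ K → Spart a b n m K - Spart a b n m J ∈ I p := by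
    intro m p J hJ K hK
    induction K, hK using Nat.le_induction with
    | base => simp
    | succ K hK ih =>
        have heq : Spart a b n m (K + 1) - Spart a b n m J =
            (Spart a b n m (K + 1) - Spart a b n m K) +
              (Spart a b n m K - Spart a b n m J) := by abel
        rw [heq]
        exact add_mem (hJ K hK) ih
  -- monotone index function
  set G : ℤ → ℕ → ℕ := fun m p => (Finset.range (p + 1)).sup (Jf m) with hG
  have hGJ : ∀ m p, Jf m p ≤ G m p := fun m p =>
    Finset.le_sup (Finset.mem_range.mpr (by omega))
  have hGmono : ∀ m p, G m p ≤ G m (p + 1) := fun m p =>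
    Finset.sup_mono (Finset.range_subset_range.mpr (by omega))
  -- construct the limits
  have hu : ∀ m : ℤ, ∃ v : U, ∀ p : ℕ, v - Spart a b n m (G m p) ∈ I p := by
    intro m
    refine hcomp (fun p => Spart a b n m (G m p)) (fun p => ?_)
    exact htel m p (G m p)
      (fun L hL => hJf m p L (le_trans (hGJ m p) hL)) _ (hGmono m p)
  choose c hc using hu
  refine ⟨c, ?_, ?_⟩
  · -- convergence of partial sums
    intro m p
    refine ⟨G m p, fun K hK => ?_⟩
    show c m - Spart a b n m K ∈ I p
    have h1 : c m - Spart a b n m (G m p) ∈ I p := hc m p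
    have h2 : Spart a b n m K - Spart a b n m (G m p) ∈ I p :=
      htel m p (G m p) (fun L hL => hJf m p L (le_trans (hGJ m p) hL)) K hK
    have heq : c m - Spart a b n m K =
        (c m - Spart a b n m (G m p)) - (Spart a b n m K - Spart a b n m (G m p)) := by
      abel
    rw [heq]
    exact sub_mem h1 h2
  · -- continuity of the resulting distribution
    intro p
    obtain ⟨Nbp, hNbp⟩ := hcb p
    obtain ⟨Na, hNa⟩ := hca p
    set Ja : ℕ := Na.toNat with hJa
    choose M hM using fun j : ℕ => hcont (a j) p
    choose NB hNB using fun j : ℕ => hcb (M j)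
    set T : ℕ := (Finset.range Ja).sup (fun j => (NB j + j - n).toNat) with hT
    refine ⟨max Nbp T, fun m hm => ?_⟩
    simp only [max_le_iff] at hm
    obtain ⟨hm1, hm2⟩ := hm
    have hSall : ∀ K : ℕ, Spart a b n m K ∈ I p := by
      intro K
      refine sub_mem (Submodule.sum_mem _ fun j _ => ?_)
        (zsmul_mem (Submodule.sum_mem _ fun j _ => ?_) _)
      · exact zsmul_mem (mul_mem_left' _ _ _ (hNbp _ (by omega))) _
      · by_cases hja : Ja ≤ j
        · exact zsmul_mem (mul_mem_left' _ _ _ (hNa _ (by omega))) _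
        · have hj' : j ∈ Finset.range Ja := Finset.mem_range.mpr (by omega)
          have hTj : (NB j + j - n).toNat ≤ T := by
            rw [hT]; exact Finset.le_sup (f := fun j => (NB j + (j:ℤ) - n).toNat) hj'
          have hb : b (m + n - j) ∈ I (M j) := hNB j _ (by omega)
          exact zsmul_mem (hM j _ hb) _
    have h1 : c m - Spart a b n m (G m p) ∈ I p := hc m p
    have heq : c m = (c m - Spart a b n m (G m p)) + Spart a b n m (G m p) := by abel
    rw [heq]
    exact add_mem h1 (hSall _)
end
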